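/- Let χ satisfy M₂(χ) < ∞ and the moment condition of order 2 with constant c. Let f ∈ C²(ℝ²) and suppose ‖S_w f − f‖_∞ = o(w^{−1}) as w → ∞, i.e. w·‖S_w f − f‖_∞ → 0. Then ∂f/∂x (x,y) + ∂f/∂y (x,y) = 0 for every (x,y) ∈ ℝ²; consequently f(x,y) = g(y−x) for all (x,y) ∈ ℝ², where g(t) := f(0,t). -/

import Mathlib

open MeasureTheory Filter
open scoped ENNReal BigOperators Topology

noncomputable def absMoment (χ : ℝ × ℝ → ℝ) (p₁ p₂ : ℕ) : ℝ≥0∞ :=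
  ⨆ u : ℝ, ⨆ v : ℝ, ∑' k : ℤ, ∑' j : ℤ,
    ENNReal.ofReal (|χ (u - (k : ℝ), v - (j : ℝ))| * |u - (k : ℝ)| ^ p₁ * |v - (j : ℝ)| ^ p₂)

noncomputable def Mmoment (χ : ℝ × ℝ → ℝ) (η : ℕ) : ℝ≥0∞ :=
  ⨆ p : {p : ℕ × ℕ // p.1 + p.2 = η}, absMoment χ p.1.1 p.1.2

def PartitionOfUnity2 (χ : ℝ × ℝ → ℝ) : Prop :=
  ∀ u v : ℝ, ∑' k : ℤ, ∑' j : ℤ, χ (u - (k : ℝ), v - (j : ℝ)) = 1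

def MomentCondition (χ : ℝ × ℝ → ℝ) (r : ℕ) (c : ℝ) : Prop :=
  (∀ u v : ℝ, ∀ p₁ p₂ : ℕ, 1 ≤ p₁ + p₂ → p₁ + p₂ ≤ r - 1 →
    ∑' k : ℤ, ∑' j : ℤ, χ (u - (k : ℝ), v - (j : ℝ)) * (u - (k : ℝ)) ^ p₁ * (v - (j : ℝ)) ^ p₂ = 0) ∧
  (∀ u v : ℝ, ∀ p₁ p₂ : ℕ, p₁ + p₂ = r →
    ∑' k : ℤ, ∑' j : ℤ, χ (u - (k : ℝ), v - (j : ℝ)) * (u - (k : ℝ)) ^ p₁ * (v - (j : ℝ)) ^ p₂ = c)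

noncomputable def Gop (χ : ℝ × ℝ → ℝ) (w : ℝ) (f : ℝ × ℝ → ℝ) (x y : ℝ) : ℝ :=
  ∑' k : ℤ, ∑' j : ℤ, χ (w * x - (k : ℝ), w * y - (j : ℝ)) * f ((k : ℝ) / w, (j : ℝ) / w)

noncomputable def Sop (χ : ℝ × ℝ → ℝ) (w : ℝ) (f : ℝ × ℝ → ℝ) (x y : ℝ) : ℝ :=
  ∑' k : ℤ, ∑' j : ℤ, χ (w * x - (k : ℝ), w * y - (j : ℝ)) *
    (w ^ 2 * ∫ u in ((k : ℝ) / w)..(((k : ℝ) + 1) / w),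
      ∫ v in ((j : ℝ) / w)..(((j : ℝ) + 1) / w), f (u, v))

noncomputable def pX (f : ℝ × ℝ → ℝ) : ℝ × ℝ → ℝ := fun p => deriv (fun t => f (t, p.2)) p.1
noncomputable def pY (f : ℝ × ℝ → ℝ) : ℝ × ℝ → ℝ := fun p => deriv (fun t => f (p.1, t)) p.2
noncomputable def pd (f : ℝ × ℝ → ℝ) (i j : ℕ) : ℝ × ℝ → ℝ := pX^[i] (pY^[j] f)

noncomputable def supNorm (g : ℝ × ℝ → ℝ) : ℝ := ⨆ p : ℝ × ℝ, |g p|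

def mixedDiff (f : ℝ × ℝ → ℝ) (u v x y : ℝ) : ℝ := f (x, y) - f (x, v) - f (u, y) + f (u, v)

def BContinuous (f : ℝ × ℝ → ℝ) : Prop :=
  ∀ x₀ y₀ : ℝ, Tendsto (fun p : ℝ × ℝ => mixedDiff f x₀ y₀ p.1 p.2) (nhds (x₀, y₀)) (nhds 0)

noncomputable def omegaB (f : ℝ × ℝ → ℝ) (δ₁ δ₂ : ℝ) : ℝ :=
  sSup {t : ℝ | ∃ x y u v : ℝ, |x - u| < δ₁ ∧ |y - v| < δ₂ ∧ t = |mixedDiff f u v x y|}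

noncomputable def Kop (χ : ℝ × ℝ → ℝ) (w : ℝ) (f : ℝ × ℝ → ℝ) (x y : ℝ) : ℝ :=
  Sop χ w (fun p => f (p.1, y) + f (x, p.2) - f (p.1, p.2)) x y

/-!
Averaging the first-order Taylor expansion of `f` at `(x, y)` over the cell
`[k/w, (k+1)/w] × [j/w, (j+1)/w]` gives `f (x, y) + f_x ((k+½)/w - x) + f_y ((j+½)/w - y)` up to
an error `O(w⁻² (1 + |wx - k| + |wy - j|)²)`. Summing against `χ (wx - k, wy - j)`, the partition
of unity and the vanishing first moments leave `S_w f = f + (f_x + f_y) / (2w) + O(w⁻²)`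
uniformly, the error being finite because `χ` is bounded and `M₂(χ) < ∞`. Hence
`‖S_w f - f‖ = o(w⁻¹)` forces `f_x + f_y = 0`, and `f` is constant along the lines `y - x = t`.
-/

def kernelWeight (χ : ℝ × ℝ → ℝ) (u v : ℝ) (p : ℤ × ℤ) : ℝ :=
  |χ (u - p.1, v - p.2)| * (1 + |u - p.1| + |v - p.2|) ^ 2

section Kernel

variable {χ : ℝ × ℝ → ℝ}

lemma absMoment_le_Mmoment {p₁ p₂ η : ℕ} (h : p₁ + p₂ = η) : absMoment χ p₁ p₂ ≤ Mmoment χ η :=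
  le_iSup (fun p : {p : ℕ × ℕ // p.1 + p.2 = η} => absMoment χ p.1.1 p.1.2) ⟨(p₁, p₂), h⟩

lemma tsum_ofReal_le_absMoment (p₁ p₂ : ℕ) (u v : ℝ) :
    ∑' p : ℤ × ℤ, ENNReal.ofReal (|χ (u - p.1, v - p.2)| * |u - p.1| ^ p₁ * |v - p.2| ^ p₂)
      ≤ absMoment χ p₁ p₂ := by
  rw [ENNReal.tsum_prod']
  exact le_iSup₂_of_le (f := fun u v => ∑' k : ℤ, ∑' j : ℤ,
    ENNReal.ofReal (|χ (u - k, v - j)| * |u - k| ^ p₁ * |v - j| ^ p₂)) u v le_rfl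

lemma summable_absMoment {p₁ p₂ : ℕ} (h : absMoment χ p₁ p₂ ≠ ⊤) (u v : ℝ) :
    Summable fun p : ℤ × ℤ => |χ (u - p.1, v - p.2)| * |u - p.1| ^ p₁ * |v - p.2| ^ p₂ := by
  have hfin := ne_top_of_le_ne_top h (tsum_ofReal_le_absMoment p₁ p₂ u v)
  exact (ENNReal.summable_toReal hfin).congr fun p => ENNReal.toReal_ofReal (by positivity)

lemma tsum_le_absMoment {p₁ p₂ : ℕ} (h : absMoment χ p₁ p₂ ≠ ⊤) (u v : ℝ) :
    ∑' p : ℤ × ℤ, |χ (u - p.1, v - p.2)| * |u - p.1| ^ p₁ * |v - p.2| ^ p₂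
      ≤ (absMoment χ p₁ p₂).toReal := by
  rw [← ENNReal.ofReal_le_iff_le_toReal h, ENNReal.ofReal_tsum_of_nonneg (fun _ => by positivity)
    (summable_absMoment h u v)]
  exact tsum_ofReal_le_absMoment p₁ p₂ u v

lemma one_le_abs_sub_of_notMem_Icc_floor {u : ℝ} {k : ℤ} (hk : k ∉ Finset.Icc ⌊u⌋ (⌊u⌋ + 1)) :
    1 ≤ |u - k| := by
  rw [Finset.mem_Icc, not_and_or, not_le, not_le] at hk
  rcases hk with hk | hk
  · have : (k : ℝ) + 1 ≤ ⌊u⌋ := by exact_mod_cast hk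
    linarith [Int.floor_le u, le_abs_self (u - k)]
  · have : (⌊u⌋ : ℝ) + 2 ≤ k := by exact_mod_cast (by omega : ⌊u⌋ + 2 ≤ k)
    linarith [Int.lt_floor_add_one u, neg_abs_le (u - k)]

lemma exists_summable_abs_kernel (hχb : ∃ C : ℝ, ∀ p, |χ p| ≤ C) (hM2 : Mmoment χ 2 < ⊤) :
    ∃ K : ℝ, ∀ u v : ℝ, Summable (fun p : ℤ × ℤ => |χ (u - p.1, v - p.2)|) ∧
      ∑' p : ℤ × ℤ, |χ (u - p.1, v - p.2)| ≤ K := by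
  obtain ⟨C, hC⟩ := hχb
  have h20 : absMoment χ 2 0 ≠ ⊤ := (lt_of_le_of_lt (absMoment_le_Mmoment rfl) hM2).ne
  have h02 : absMoment χ 0 2 ≠ ⊤ := (lt_of_le_of_lt (absMoment_le_Mmoment rfl) hM2).ne
  refine ⟨(absMoment χ 2 0).toReal + (absMoment χ 0 2).toReal + 4 * C, fun u v => ?_⟩
  -- Off these four nodes `|u - k| ≥ 1` or `|v - j| ≥ 1`, so there `|χ|` is dominated by the
  -- second absolute moments; on them the sup bound `C` is used.
  set S : Finset (ℤ × ℤ) := Finset.Icc ⌊u⌋ (⌊u⌋ + 1) ×ˢ Finset.Icc ⌊v⌋ (⌊v⌋ + 1)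
  have hS : Summable fun p : ℤ × ℤ => if p ∈ S then C else 0 :=
    summable_of_ne_finset_zero fun p hp => if_neg hp
  have hS_tsum : ∑' p : ℤ × ℤ, (if p ∈ S then C else 0) = 4 * C := by
    rw [tsum_eq_sum fun p hp => if_neg hp, Finset.sum_ite_mem, Finset.inter_self,
      Finset.sum_const, Finset.card_product, Int.card_Icc, Int.card_Icc,
      show ⌊u⌋ + 1 + 1 - ⌊u⌋ = 2 by ring, show ⌊v⌋ + 1 + 1 - ⌊v⌋ = 2 by ring, show (2 : ℤ).toNat = 2 from rfl, nsmul_eq_mul]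
    norm_num
  have hdom : ∀ p : ℤ × ℤ, |χ (u - p.1, v - p.2)| ≤
      |χ (u - p.1, v - p.2)| * |u - p.1| ^ 2 * |v - p.2| ^ 0 +
        |χ (u - p.1, v - p.2)| * |u - p.1| ^ 0 * |v - p.2| ^ 2 + if p ∈ S then C else 0 := by
    intro p
    have hχ0 := abs_nonneg (χ (u - p.1, v - p.2))
    by_cases hp : p ∈ S
    · rw [if_pos hp]
      nlinarith [hC (u - p.1, v - p.2), sq_nonneg |u - p.1|, sq_nonneg |v - p.2|]
    · rw [if_neg hp, pow_zero, pow_zero, mul_one, mul_one, add_zero]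
      simp only [S, Finset.mem_product, not_and_or] at hp
      rcases hp with hp | hp
      · have := one_le_abs_sub_of_notMem_Icc_floor hp
        nlinarith [mul_nonneg hχ0 (sq_nonneg |v - p.2|),
          mul_le_mul_of_nonneg_left (one_le_pow₀ this : (1 : ℝ) ≤ _ ^ 2) hχ0]
      · have := one_le_abs_sub_of_notMem_Icc_floor hp
        nlinarith [mul_nonneg hχ0 (sq_nonneg |u - p.1|),
          mul_le_mul_of_nonneg_left (one_le_pow₀ this : (1 : ℝ) ≤ _ ^ 2) hχ0]
  have hg₁ := (summable_absMoment h20 u v).add (summable_absMoment h02 u v)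
  have hg := hg₁.add hS
  have hsum := hg.of_nonneg_of_le (fun _ => abs_nonneg _) hdom
  refine ⟨hsum, (hsum.tsum_le_tsum hdom hg).trans ?_⟩
  rw [hg₁.tsum_add hS, (summable_absMoment h20 u v).tsum_add (summable_absMoment h02 u v), hS_tsum]
  gcongr
  exacts [tsum_le_absMoment h20 u v, tsum_le_absMoment h02 u v]

lemma exists_summable_kernelWeight (hχb : ∃ C : ℝ, ∀ p, |χ p| ≤ C) (hM2 : Mmoment χ 2 < ⊤) :
    ∃ K : ℝ, ∀ u v : ℝ, Summable (kernelWeight χ u v) ∧ ∑' p, kernelWeight χ u v p ≤ K := by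
  obtain ⟨K₀, hK₀⟩ := exists_summable_abs_kernel hχb hM2
  have h20 : absMoment χ 2 0 ≠ ⊤ := (lt_of_le_of_lt (absMoment_le_Mmoment rfl) hM2).ne
  have h02 : absMoment χ 0 2 ≠ ⊤ := (lt_of_le_of_lt (absMoment_le_Mmoment rfl) hM2).ne
  refine ⟨3 * (K₀ + (absMoment χ 2 0).toReal + (absMoment χ 0 2).toReal), fun u v => ?_⟩
  obtain ⟨hs₀, hK₀⟩ := hK₀ u v
  have hs := (hs₀.add (summable_absMoment h20 u v)).add (summable_absMoment h02 u v)
  have hdom : ∀ p : ℤ × ℤ, kernelWeight χ u v p ≤ 3 * (|χ (u - p.1, v - p.2)| +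
      |χ (u - p.1, v - p.2)| * |u - p.1| ^ 2 * |v - p.2| ^ 0 +
        |χ (u - p.1, v - p.2)| * |u - p.1| ^ 0 * |v - p.2| ^ 2) := by
    intro p
    rw [kernelWeight, pow_zero, pow_zero, mul_one, mul_one]
    have hχ0 := abs_nonneg (χ (u - p.1, v - p.2))
    nlinarith [mul_nonneg hχ0 (sq_nonneg (1 - |u - p.1|)),
      mul_nonneg hχ0 (sq_nonneg (1 - |v - p.2|)), mul_nonneg hχ0 (sq_nonneg (|u - p.1| - |v - p.2|))]
  have hw : Summable (kernelWeight χ u v) :=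
    (hs.mul_left 3).of_nonneg_of_le (fun p => by unfold kernelWeight; positivity) hdom
  refine ⟨hw, (hw.tsum_le_tsum hdom (hs.mul_left 3)).trans ?_⟩
  rw [tsum_mul_left, (hs₀.add (summable_absMoment h20 u v)).tsum_add (summable_absMoment h02 u v),
    hs₀.tsum_add (summable_absMoment h20 u v)]
  gcongr
  exacts [tsum_le_absMoment h20 u v, tsum_le_absMoment h02 u v]

lemma abs_tsum_kernel_affine_sub_le {c : ℝ} (hpart : PartitionOfUnity2 χ)
    (hmom : MomentCondition χ 2 c) {u v K M a b₁ b₂ : ℝ} {r : ℤ × ℤ → ℝ}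
    (hw : Summable (kernelWeight χ u v)) (hK : ∑' p, kernelWeight χ u v p ≤ K)
    (hr : ∀ p : ℤ × ℤ, |r p| ≤ M * (1 + |u - p.1| + |v - p.2|) ^ 2) :
    |∑' k : ℤ, ∑' j : ℤ, χ (u - k, v - j) * (a + b₁ * (u - k) + b₂ * (v - j) + r (k, j)) - a|
      ≤ M * K := by
  set χ' : ℤ × ℤ → ℝ := fun p => χ (u - p.1, v - p.2)
  have hM : 0 ≤ M := nonneg_of_mul_nonneg_left ((abs_nonneg _).trans (hr 0)) (by positivity)
  have hfac : ∀ p : ℤ × ℤ, 1 ≤ (1 + |u - p.1| + |v - p.2|) ^ 2 ∧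
      |u - p.1| ≤ (1 + |u - p.1| + |v - p.2|) ^ 2 ∧ |v - p.2| ≤ (1 + |u - p.1| + |v - p.2|) ^ 2 :=
    fun p => by refine ⟨?_, ?_, ?_⟩ <;> nlinarith [abs_nonneg (u - p.1), abs_nonneg (v - p.2)]
  have hdom : ∀ (g : ℤ × ℤ → ℝ) (m : ℝ), (∀ p, |g p| ≤ m * (1 + |u - p.1| + |v - p.2|) ^ 2) →
      ∀ p, ‖χ' p * g p‖ ≤ m * kernelWeight χ u v p := fun g m hg p => by
    rw [Real.norm_eq_abs, abs_mul, kernelWeight, mul_left_comm]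
    exact mul_le_mul_of_nonneg_left (hg p) (abs_nonneg _)
  have hs₀ : Summable χ' :=
    hw.of_norm_bounded fun p => le_mul_of_one_le_right (abs_nonneg _) (hfac p).1
  have hs₁ : Summable fun p => χ' p * (u - p.1) :=
    (hw.mul_left 1).of_norm_bounded (hdom _ 1 fun p => by simpa using (hfac p).2.1)
  have hs₂ : Summable fun p => χ' p * (v - p.2) :=
    (hw.mul_left 1).of_norm_bounded (hdom _ 1 fun p => by simpa using (hfac p).2.2)
  have hs₃ : Summable fun p => χ' p * r p := (hw.mul_left M).of_norm_bounded (hdom r M hr)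
  have h₀ : HasSum χ' 1 := hs₀.hasSum_iff.mpr (hs₀.tsum_prod.trans (hpart u v))
  have h₁ : HasSum (fun p => χ' p * (u - p.1)) 0 := hs₁.hasSum_iff.mpr
    (hs₁.tsum_prod.trans (by simpa using hmom.1 u v 1 0 le_rfl le_rfl))
  have h₂ : HasSum (fun p => χ' p * (v - p.2)) 0 := hs₂.hasSum_iff.mpr
    (hs₂.tsum_prod.trans (by simpa using hmom.1 u v 0 1 le_rfl le_rfl))
  have htot : HasSum (fun p => χ' p * (a + b₁ * (u - p.1) + b₂ * (v - p.2) + r p))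
      (a + ∑' p, χ' p * r p) := by
    have h := (((h₀.mul_left a).add (h₁.mul_left b₁)).add (h₂.mul_left b₂)).add hs₃.hasSum
    rw [mul_one, mul_zero, mul_zero, add_zero, add_zero] at h
    exact h.congr_fun fun p => by ring
  have hT : ‖∑' p, χ' p * r p‖ ≤ M * K := by
    refine (tsum_of_norm_bounded (hw.mul_left M).hasSum (hdom r M hr)).trans ?_
    rw [tsum_mul_left]
    exact mul_le_mul_of_nonneg_left hK hM
  rw [← htot.summable.tsum_prod, htot.tsum_eq, add_sub_cancel_left]
  exact hT

end Kernel

lemma abs_sub_le_of_hasDerivAt {g g' : ℝ → ℝ} {C : ℝ} (hg : ∀ t, HasDerivAt g (g' t) t)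
    (hC : ∀ t, |g' t| ≤ C) (s t : ℝ) : |g s - g t| ≤ C * |s - t| :=
  convex_univ.norm_image_sub_le_of_norm_hasDerivWithin_le (fun x _ => (hg x).hasDerivWithinAt)
    (fun x _ => hC x) (Set.mem_univ t) (Set.mem_univ s)

lemma abs_sub_sub_mul_le_of_hasDerivAt {g g' g'' : ℝ → ℝ} {C : ℝ}
    (hg : ∀ t, HasDerivAt g (g' t) t) (hg' : ∀ t, HasDerivAt g' (g'' t) t)
    (hC : ∀ t, |g'' t| ≤ C) (x u : ℝ) :
    |g u - g x - g' x * (u - x)| ≤ C * |u - x| ^ 2 := by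
  have hC₀ : 0 ≤ C := (abs_nonneg _).trans (hC 0)
  have hderiv : ∀ t, HasDerivAt (fun t => g t - g' x * t) (g' t - g' x) t := fun t =>
    (hg t).sub (by simpa using (hasDerivAt_id' t).const_mul (g' x))
  have hbound : ∀ t ∈ Set.uIcc x u, ‖g' t - g' x‖ ≤ C * |u - x| := fun t ht => by
    refine (abs_sub_le_of_hasDerivAt hg' hC t x).trans (mul_le_mul_of_nonneg_left ?_ hC₀)
    exact Set.abs_sub_left_of_mem_uIcc ht
  have := (convex_uIcc x u).norm_image_sub_le_of_norm_hasDerivWithin_le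
    (fun t _ => (hderiv t).hasDerivWithinAt) hbound Set.left_mem_uIcc Set.right_mem_uIcc
  rw [Real.norm_eq_abs, Real.norm_eq_abs] at this
  calc |g u - g x - g' x * (u - x)| = |g u - g' x * u - (g x - g' x * x)| := by ring_nf
    _ ≤ C * |u - x| * |u - x| := this
    _ = C * |u - x| ^ 2 := by ring

section PartialDerivatives

variable {f : ℝ × ℝ → ℝ}

lemma pX_eq_fderiv (hf : Differentiable ℝ f) (z : ℝ × ℝ) : pX f z = fderiv ℝ f z (1, 0) :=
  ((hf z).hasFDerivAt.comp_hasDerivAt z.1 ((hasDerivAt_id _).prodMk (hasDerivAt_const _ _))).deriv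

lemma pY_eq_fderiv (hf : Differentiable ℝ f) (z : ℝ × ℝ) : pY f z = fderiv ℝ f z (0, 1) :=
  ((hf z).hasFDerivAt.comp_hasDerivAt z.2 ((hasDerivAt_const _ _).prodMk (hasDerivAt_id _))).deriv

lemma hasDerivAt_pX (hf : Differentiable ℝ f) (x y : ℝ) :
    HasDerivAt (fun t => f (t, y)) (pX f (x, y)) x :=
  ((hf _).comp x (differentiableAt_id.prodMk (differentiableAt_const y))).hasDerivAt

lemma hasDerivAt_pY (hf : Differentiable ℝ f) (x y : ℝ) :
    HasDerivAt (fun t => f (x, t)) (pY f (x, y)) y :=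
  ((hf _).comp y ((differentiableAt_const x).prodMk differentiableAt_id)).hasDerivAt

lemma differentiable_pX (hf : ContDiff ℝ 2 f) : Differentiable ℝ (pX f) := by
  rw [funext (pX_eq_fderiv (hf.differentiable (by norm_num)))]
  exact ((hf.fderiv_right (m := 1) (by norm_num)).clm_apply contDiff_const).differentiable
    one_ne_zero

lemma differentiable_pY (hf : ContDiff ℝ 2 f) : Differentiable ℝ (pY f) := by
  rw [funext (pY_eq_fderiv (hf.differentiable (by norm_num)))]
  exact ((hf.fderiv_right (m := 1) (by norm_num)).clm_apply contDiff_const).differentiable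
    one_ne_zero

lemma abs_sub_linear_le_of_contDiff (hf : ContDiff ℝ 2 f) {A B D : ℝ}
    (hxx : ∀ z, |pX (pX f) z| ≤ A) (hxy : ∀ z, |pX (pY f) z| ≤ B)
    (hyy : ∀ z, |pY (pY f) z| ≤ D) (x y u v : ℝ) :
    |f (u, v) - f (x, y) - pX f (x, y) * (u - x) - pY f (x, y) * (v - y)|
      ≤ (A + B + D) * (|u - x| + |v - y|) ^ 2 := by
  have hf₁ := hf.differentiable (by norm_num)
  have hvert : |f (u, v) - f (u, y) - pY f (u, y) * (v - y)| ≤ D * |v - y| ^ 2 :=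
    abs_sub_sub_mul_le_of_hasDerivAt (hasDerivAt_pY hf₁ u) (hasDerivAt_pY (differentiable_pY hf) u)
      (fun t => hyy _) y v
  have hmixed : |pY f (u, y) - pY f (x, y)| ≤ B * |u - x| :=
    abs_sub_le_of_hasDerivAt (fun t => hasDerivAt_pX (differentiable_pY hf) t y) (fun _ => hxy _)
      u x
  have hhor : |f (u, y) - f (x, y) - pX f (x, y) * (u - x)| ≤ A * |u - x| ^ 2 :=
    abs_sub_sub_mul_le_of_hasDerivAt (fun t => hasDerivAt_pX hf₁ t y)
      (fun t => hasDerivAt_pX (differentiable_pX hf) t y) (fun t => hxx _) x u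
  have hA : 0 ≤ A := (abs_nonneg _).trans (hxx 0)
  have hB : 0 ≤ B := (abs_nonneg _).trans (hxy 0)
  have hD : 0 ≤ D := (abs_nonneg _).trans (hyy 0)
  have ha := abs_nonneg (u - x)
  have hb := abs_nonneg (v - y)
  calc |f (u, v) - f (x, y) - pX f (x, y) * (u - x) - pY f (x, y) * (v - y)|
      = |(f (u, v) - f (u, y) - pY f (u, y) * (v - y)) + (pY f (u, y) - pY f (x, y)) * (v - y)
          + (f (u, y) - f (x, y) - pX f (x, y) * (u - x))| := by ring_nf
    _ ≤ D * |v - y| ^ 2 + B * |u - x| * |v - y| + A * |u - x| ^ 2 := by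
        refine (abs_add_le _ _).trans
          (add_le_add ((abs_add_le _ _).trans (add_le_add hvert ?_)) hhor)
        rw [abs_mul]
        exact mul_le_mul_of_nonneg_right hmixed hb
    _ ≤ (A + B + D) * (|u - x| + |v - y|) ^ 2 := by
        nlinarith [mul_nonneg (mul_nonneg hA ha) hb, mul_nonneg (mul_nonneg hB ha) hb,
          mul_nonneg (mul_nonneg hD ha) hb, mul_nonneg hB (sq_nonneg |u - x|),
          mul_nonneg hB (sq_nonneg |v - y|), mul_nonneg hA (sq_nonneg |v - y|),
          mul_nonneg hD (sq_nonneg |u - x|)]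

end PartialDerivatives

lemma integral_const_add_mul_sub (a b y s t : ℝ) :
    ∫ v in s..t, (a + b * (v - y)) = (t - s) * (a + b * ((s + t) / 2 - y)) := by
  rw [intervalIntegral.integral_add intervalIntegrable_const
      ((by fun_prop : Continuous fun v => b * (v - y)).intervalIntegrable _ _),
    intervalIntegral.integral_const_mul, intervalIntegral.integral_comp_sub_right fun v => v,
    integral_id, intervalIntegral.integral_const, smul_eq_mul]
  ring

noncomputable def cellMean (w : ℝ) (k j : ℤ) (g : ℝ × ℝ → ℝ) : ℝ :=
  w ^ 2 * ∫ u in (k / w : ℝ)..((k + 1) / w), ∫ v in (j / w : ℝ)..((j + 1) / w), g (u, v)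

section CellMean

variable {w : ℝ} {k j : ℤ}

lemma cellMean_affine (hw : 0 < w) (a b₁ b₂ x y : ℝ) :
    cellMean w k j (fun p => a + b₁ * (p.1 - x) + b₂ * (p.2 - y)) =
      a + b₁ * ((k + 1 / 2) / w - x) + b₂ * ((j + 1 / 2) / w - y) := by
  have hinner : ∀ u : ℝ, ∫ v in (j / w : ℝ)..((j + 1) / w), (a + b₁ * (u - x) + b₂ * (v - y)) =
      (a + b₂ * ((j + 1 / 2) / w - y)) / w + b₁ / w * (u - x) := fun u => by
    rw [integral_const_add_mul_sub]
    field_simp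
    ring
  simp only [cellMean, hinner, integral_const_add_mul_sub]
  field_simp
  ring

lemma cellMean_sub {g h : ℝ × ℝ → ℝ} (hg : Continuous g) (hh : Continuous h) :
    cellMean w k j (fun p => g p - h p) = cellMean w k j g - cellMean w k j h := by
  have hslice : ∀ {φ : ℝ × ℝ → ℝ}, Continuous φ → ∀ u : ℝ, Continuous fun v => φ (u, v) :=
    fun hφ u => hφ.comp (Continuous.prodMk_right u)
  have houter : ∀ {φ : ℝ × ℝ → ℝ}, Continuous φ →
      Continuous fun u => ∫ v in (j / w : ℝ)..((j + 1) / w), φ (u, v) := fun {φ} hφ =>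
    intervalIntegral.continuous_parametric_intervalIntegral_of_continuous'
      (f := fun u v => φ (u, v)) hφ _ _
  simp only [cellMean, ← mul_sub]
  congr 1
  rw [← intervalIntegral.integral_sub ((houter hg).intervalIntegrable _ _)
    ((houter hh).intervalIntegrable _ _)]
  refine intervalIntegral.integral_congr fun u _ => ?_
  exact intervalIntegral.integral_sub ((hslice hg u).intervalIntegrable _ _)
    ((hslice hh u).intervalIntegrable _ _)

lemma abs_sub_le_of_mem_cell (hw : 0 < w) {u : ℝ} (hu : u ∈ Set.Icc (k / w : ℝ) ((k + 1) / w))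
    (x : ℝ) : |u - x| ≤ (1 + |w * x - k|) / w := by
  rw [Set.mem_Icc, div_le_iff₀ hw, le_div_iff₀ hw] at hu
  rw [le_div_iff₀ hw, ← abs_of_pos hw, ← abs_mul, abs_of_pos hw]
  calc |(u - x) * w| = |(u * w - k) - (w * x - k)| := by ring_nf
    _ ≤ |u * w - k| + |w * x - k| := abs_sub _ _
    _ ≤ 1 + |w * x - k| := by
        gcongr
        rw [abs_le]
        constructor <;> linarith

lemma abs_cellMean_le (hw : 0 < w) {g : ℝ × ℝ → ℝ} {M : ℝ}
    (hg : ∀ u ∈ Set.Icc (k / w : ℝ) ((k + 1) / w), ∀ v ∈ Set.Icc (j / w : ℝ) ((j + 1) / w),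
      |g (u, v)| ≤ M) :
    |cellMean w k j g| ≤ M := by
  have hlen : ∀ m : ℤ, |((m : ℝ) + 1) / w - m / w| = 1 / w := fun m => by
    rw [← sub_div, add_sub_cancel_left, abs_of_pos (by positivity)]
  have hsub : ∀ m : ℤ, Set.uIoc (m / w : ℝ) ((m + 1) / w) ⊆ Set.Icc (m / w : ℝ) ((m + 1) / w) :=
    fun m => by
      rw [Set.uIoc_of_le (div_le_div_of_nonneg_right (by linarith) hw.le)]
      exact Set.Ioc_subset_Icc_self
  have hinner : ∀ u ∈ Set.uIoc (k / w : ℝ) ((k + 1) / w),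
      ‖∫ v in (j / w : ℝ)..((j + 1) / w), g (u, v)‖ ≤ M * (1 / w) := fun u hu => by
    rw [← hlen j]
    exact intervalIntegral.norm_integral_le_of_norm_le_const fun v hv =>
      hg u (hsub k hu) v (hsub j hv)
  have := intervalIntegral.norm_integral_le_of_norm_le_const hinner
  rw [hlen k, Real.norm_eq_abs] at this
  rw [cellMean, abs_mul, abs_of_pos (by positivity)]
  calc w ^ 2 * |∫ u in (k / w : ℝ)..((k + 1) / w), ∫ v in (j / w : ℝ)..((j + 1) / w), g (u, v)|
      ≤ w ^ 2 * (M * (1 / w) * (1 / w)) := by gcongr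
    _ = M := by field_simp

end CellMean

lemma abs_cellMean_sub_affine_le {w : ℝ} (hw : 0 < w) (k j : ℤ) {f : ℝ × ℝ → ℝ}
    (hf : Continuous f) {x y F₁ F₂ C : ℝ} (hC : 0 ≤ C)
    (hρ : ∀ u v,
      |f (u, v) - f (x, y) - F₁ * (u - x) - F₂ * (v - y)| ≤ C * (|u - x| + |v - y|) ^ 2) :
    |cellMean w k j f - (f (x, y) + F₁ * ((k + 1 / 2) / w - x) + F₂ * ((j + 1 / 2) / w - y))|
      ≤ 4 * C / w ^ 2 * (1 + |w * x - k| + |w * y - j|) ^ 2 := by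
  rw [← cellMean_affine hw, ← cellMean_sub hf (by fun_prop)]
  refine abs_cellMean_le hw fun u hu v hv => ?_
  have hA := abs_nonneg (w * x - k)
  have hB := abs_nonneg (w * y - j)
  calc |f (u, v) - (f (x, y) + F₁ * ((u, v).1 - x) + F₂ * ((u, v).2 - y))|
      = |f (u, v) - f (x, y) - F₁ * (u - x) - F₂ * (v - y)| := by ring_nf
    _ ≤ C * (|u - x| + |v - y|) ^ 2 := hρ u v
    _ ≤ C * ((1 + |w * x - k|) / w + (1 + |w * y - j|) / w) ^ 2 := by
        gcongr
        exacts [abs_sub_le_of_mem_cell hw hu x, abs_sub_le_of_mem_cell hw hv y]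
    _ = C * (2 + |w * x - k| + |w * y - j|) ^ 2 / w ^ 2 := by field_simp; ring
    _ ≤ C * (4 * (1 + |w * x - k| + |w * y - j|) ^ 2) / w ^ 2 := by gcongr; nlinarith
    _ = 4 * C / w ^ 2 * (1 + |w * x - k| + |w * y - j|) ^ 2 := by ring

theorem exists_abs_Sop_sub_le {χ : ℝ × ℝ → ℝ} (hχb : ∃ C : ℝ, ∀ p, |χ p| ≤ C)
    (hpart : PartitionOfUnity2 χ) {c : ℝ} (hM2 : Mmoment χ 2 < ⊤) (hmom : MomentCondition χ 2 c)
    {f : ℝ × ℝ → ℝ} (hf : ContDiff ℝ 2 f)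
    (hbd : ∀ i j : ℕ, i + j ≤ 2 → ∃ C : ℝ, ∀ z, |pd f i j z| ≤ C) :
    ∃ K : ℝ, ∀ w > 0, ∀ x y : ℝ,
      |Sop χ w f x y - f (x, y) - (pX f (x, y) + pY f (x, y)) / (2 * w)| ≤ K / w ^ 2 := by
  obtain ⟨K, hK⟩ := exists_summable_kernelWeight hχb hM2
  obtain ⟨A, hA⟩ := hbd 2 0 (by norm_num)
  obtain ⟨B, hB⟩ := hbd 1 1 (by norm_num)
  obtain ⟨D, hD⟩ := hbd 0 2 (by norm_num)
  have hC : 0 ≤ A + B + D := by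
    linarith [(abs_nonneg _).trans (hA 0), (abs_nonneg _).trans (hB 0), (abs_nonneg _).trans (hD 0)]
  refine ⟨4 * (A + B + D) * K, fun w hw x y => ?_⟩
  obtain ⟨hsum, hKuv⟩ := hK (w * x) (w * y)
  set F₁ := pX f (x, y)
  set F₂ := pY f (x, y)
  set r : ℤ × ℤ → ℝ := fun p => cellMean w p.1 p.2 f -
    (f (x, y) + F₁ * ((p.1 + 1 / 2) / w - x) + F₂ * ((p.2 + 1 / 2) / w - y))
  have hr : ∀ p : ℤ × ℤ,
      |r p| ≤ 4 * (A + B + D) / w ^ 2 * (1 + |w * x - p.1| + |w * y - p.2|) ^ 2 :=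
    fun p => abs_cellMean_sub_affine_le hw p.1 p.2 hf.continuous hC
      (abs_sub_linear_le_of_contDiff hf hA hB hD x y)
  -- `F ((k + ½) / w - x) = F / (2w) - (F / w) (wx - k)`: the drift plus a first-moment term.
  have hS : Sop χ w f x y = ∑' k : ℤ, ∑' j : ℤ, χ (w * x - k, w * y - j) *
      (f (x, y) + (F₁ + F₂) / (2 * w) + -F₁ / w * (w * x - k) + -F₂ / w * (w * y - j)
        + r (k, j)) := by
    refine tsum_congr fun k => tsum_congr fun j => congrArg _ ?_
    change cellMean w k j f = _
    simp only [r]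
    field_simp
    ring
  have hexp := abs_tsum_kernel_affine_sub_le (a := f (x, y) + (F₁ + F₂) / (2 * w))
    (b₁ := -F₁ / w) (b₂ := -F₂ / w) hpart hmom hsum hKuv hr
  rw [← hS] at hexp
  calc |Sop χ w f x y - f (x, y) - (F₁ + F₂) / (2 * w)|
      = |Sop χ w f x y - (f (x, y) + (F₁ + F₂) / (2 * w))| := by ring_nf
    _ ≤ 4 * (A + B + D) / w ^ 2 * K := hexp
    _ = 4 * (A + B + D) * K / w ^ 2 := by ring

lemma eq_zero_of_tendsto_mul_iSup {E : ℝ → ℝ × ℝ → ℝ} {L : ℝ × ℝ → ℝ} {K B : ℝ}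
    (hL : ∀ z, |L z| ≤ B) (hE : ∀ w > 0, ∀ z, |E w z - L z / w| ≤ K / w ^ 2)
    (hlim : Tendsto (fun w => w * ⨆ z, |E w z|) atTop (𝓝 0)) (z : ℝ × ℝ) : L z = 0 := by
  have hbound : ∀ w > 0, |L z| ≤ w * (⨆ z, |E w z|) + K / w := by
    intro w hw
    have hLw : ∀ z, |L z / w| = |L z| / w := fun z => by rw [abs_div, abs_of_pos hw]
    -- `⨆` over an unbounded family is `0` in `ℝ`, so boundedness is needed for `le_ciSup`.
    have hbdd : BddAbove (Set.range fun z => |E w z|) := by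
      refine ⟨K / w ^ 2 + B / w, ?_⟩
      rintro _ ⟨z', rfl⟩
      have : |L z'| / w ≤ B / w := by gcongr; exact hL z'
      linarith [hE w hw z', abs_sub_abs_le_abs_sub (E w z') (L z' / w), hLw z']
    have hz : |L z| / w ≤ (⨆ z, |E w z|) + K / w ^ 2 := by
      linarith [le_ciSup hbdd z, hE w hw z, abs_sub_abs_le_abs_sub (L z / w) (E w z),
        abs_sub_comm (L z / w) (E w z), hLw z]
    calc |L z| = w * (|L z| / w) := by field_simp
      _ ≤ w * ((⨆ z, |E w z|) + K / w ^ 2) := by gcongr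
      _ = w * (⨆ z, |E w z|) + K / w := by field_simp
  have hlim' : Tendsto (fun w => w * (⨆ z, |E w z|) + K / w) atTop (𝓝 0) := by
    simpa using hlim.add (tendsto_const_nhds.div_atTop tendsto_id)
  exact abs_nonpos_iff.mp (ge_of_tendsto hlim' ((eventually_gt_atTop 0).mono hbound))

lemma eq_comp_sub_of_pX_add_pY_eq_zero {f : ℝ × ℝ → ℝ} (hf : Differentiable ℝ f)
    (h : ∀ z, pX f z + pY f z = 0) (x y : ℝ) : f (x, y) = f (0, y - x) := by
  set φ : ℝ → ℝ := fun t => f (t, y - x + t)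
  have hφ : ∀ t, HasDerivAt φ 0 t := fun t => by
    have hcurve := (hf (t, y - x + t)).hasFDerivAt.comp_hasDerivAt t
      ((hasDerivAt_id t).prodMk ((hasDerivAt_id t).const_add (y - x)))
    have h11 : ((1 : ℝ), (1 : ℝ)) = (1, 0) + (0, 1) := by simp
    rwa [h11, map_add, ← pX_eq_fderiv hf, ← pY_eq_fderiv hf, h] at hcurve
  have hconst :=
    is_const_of_deriv_eq_zero (fun t => (hφ t).differentiableAt) (fun t => (hφ t).deriv)
  simpa [φ] using hconst x 0

theorem statement3_general (χ : ℝ × ℝ → ℝ) (hχb : ∃ C : ℝ, ∀ p, |χ p| ≤ C)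
    (hpart : PartitionOfUnity2 χ)
    (c : ℝ) (hM2 : Mmoment χ 2 < ⊤) (hmom : MomentCondition χ 2 c)
    (f : ℝ × ℝ → ℝ) (hf : ContDiff ℝ 2 f)
    (hbd : ∀ i j : ℕ, i + j ≤ 2 → ∃ C : ℝ, ∀ z, |pd f i j z| ≤ C)
    (hsmall : Tendsto (fun w : ℝ => w * ⨆ p : ℝ × ℝ, |Sop χ w f p.1 p.2 - f p|)
      atTop (nhds 0)) :
    (∀ x y : ℝ, pd f 1 0 (x, y) + pd f 0 1 (x, y) = 0) ∧
    (∀ x y : ℝ, f (x, y) = f (0, y - x)) := by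
  obtain ⟨K, hK⟩ := exists_abs_Sop_sub_le hχb hpart hM2 hmom hf hbd
  obtain ⟨B₁, hB₁⟩ := hbd 1 0 (by norm_num)
  obtain ⟨B₂, hB₂⟩ := hbd 0 1 (by norm_num)
  have hL : ∀ z, pX f z + pY f z = 0 := fun z => by
    have h := eq_zero_of_tendsto_mul_iSup (L := fun z => (pX f z + pY f z) / 2)
      (B := (B₁ + B₂) / 2) (fun z => by
        rw [abs_div, abs_two]
        gcongr
        exact (abs_add_le _ _).trans (add_le_add (hB₁ z) (hB₂ z)))
      (fun w hw z => by simpa [div_div, mul_comm] using hK w hw z.1 z.2) hsmall z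
    linarith
  exact ⟨fun x y => hL (x, y),
    eq_comp_sub_of_pX_add_pY_eq_zero (hf.differentiable (by norm_num)) hL⟩

/-- inverse result. If ‖S_w f − f‖_∞ = o(w⁻¹) then f_x + f_y = 0 and
f(x,y) = g(y−x) with g(t) = f(0,t). -/
theorem statement3 (χ : ℝ × ℝ → ℝ) (hχc : Continuous χ) (hχb : ∃ C : ℝ, ∀ p, |χ p| ≤ C)
    (hpart : PartitionOfUnity2 χ)
    (c : ℝ) (hM2 : Mmoment χ 2 < ⊤) (hmom : MomentCondition χ 2 c)
    (f : ℝ × ℝ → ℝ) (hf : ContDiff ℝ 2 f)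
    (hbd : ∀ i j : ℕ, i + j ≤ 2 → ∃ C : ℝ, ∀ z, |pd f i j z| ≤ C)
    (hsmall : Tendsto (fun w : ℝ => w * ⨆ p : ℝ × ℝ, |Sop χ w f p.1 p.2 - f p|)
      atTop (nhds 0)) :
    (∀ x y : ℝ, pd f 1 0 (x, y) + pd f 0 1 (x, y) = 0) ∧
    (∀ x y : ℝ, f (x, y) = f (0, y - x)) :=
  statement3_general χ hχb hpart c hM2 hmom f hf hbd hsmall
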